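/- arXiv:1309.4837 — 2 statements merged into one kernel-verified Lean document; each statement's English description precedes it below -/
import Mathlib

section
/- If G is a graph of order n with m edges, maximum degree Δ and minimum degree δ, then q(G) ≤ (1/2)·(Δ + 2δ − 1 + sqrt((Δ + 2δ − 1)² + 16m − 8(n − 1 + Δ)δ)). -/
open Matrix Finset BigOperators

/-- A graph is `k`-degenerate if every nonempty (induced) subgraph has a vertex
of degree at most `k` within it. -/
def SimpleGraph.Degenerate {V : Type*} (k : ℕ) (G : SimpleGraph V) : Prop :=
  ∀ s : Finset V, s.Nonempty → ∃ v ∈ s, {u ∈ (s : Set V) | G.Adj v u}.ncard ≤ k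

/-- `SGraph n k`: the join of a complete graph on the first `k` vertices with an
independent set on the remaining `n - k` vertices (the graph `S_{n,k}`). -/
def SGraph (n k : ℕ) : SimpleGraph (Fin n) where
  Adj u v := u ≠ v ∧ ((u : ℕ) < k ∨ (v : ℕ) < k)
  symm := by constructor; intro u v h; exact ⟨h.1.symm, h.2.symm⟩
  loopless := by constructor; intro u h; exact h.1 rfl

instance (n k : ℕ) : DecidableRel (SGraph n k).Adj := fun u v => by
  unfold SGraph; infer_instance

/-- The signless Laplacian `Q = D + A` as a real matrix. -/
noncomputable def signlessLaplacian {n : ℕ} (G : SimpleGraph (Fin n)) :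
    Matrix (Fin n) (Fin n) ℝ :=
  letI : DecidableRel G.Adj := Classical.decRel _
  Matrix.diagonal (fun v => (G.degree v : ℝ)) + G.adjMatrix ℝ

theorem signlessLaplacian_isHermitian {n : ℕ} (G : SimpleGraph (Fin n)) :
    (signlessLaplacian G).IsHermitian := by
  letI : DecidableRel G.Adj := Classical.decRel _
  unfold signlessLaplacian
  refine (Matrix.isHermitian_diagonal _).add ?_
  rw [Matrix.IsHermitian, Matrix.conjTranspose_eq_transpose_of_trivial]
  exact SimpleGraph.isSymm_adjMatrix G

theorem adjMatrix_isHermitian {n : ℕ} (G : SimpleGraph (Fin n)) [DecidableRel G.Adj] :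
    (G.adjMatrix ℝ).IsHermitian := by
  rw [Matrix.IsHermitian, Matrix.conjTranspose_eq_transpose_of_trivial]
  exact SimpleGraph.isSymm_adjMatrix G

/-- The largest adjacency eigenvalue `μ(G)`. -/
noncomputable def muIndex {n : ℕ} (G : SimpleGraph (Fin n)) : ℝ :=
  letI : DecidableRel G.Adj := Classical.decRel _
  ⨆ i, (adjMatrix_isHermitian G).eigenvalues i

/-- The largest signless Laplacian eigenvalue `q(G)` (the `Q`-index). -/
noncomputable def qIndex {n : ℕ} (G : SimpleGraph (Fin n)) : ℝ :=
  ⨆ i, (signlessLaplacian_isHermitian G).eigenvalues i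

/-! The largest `Q`-eigenvalue `q` has an eigenvector `x`, and `y = |x|` satisfies `q y ≤ Q y`
entrywise. Summing these inequalities gives `q Σ y ≤ 2 Σ dᵥ yᵥ ≤ 2δ Σ y + 2(2m - nδ) y_u`, where
`u` maximizes `y`, while the inequality at `u` alone gives `Σ y ≥ (1 + q - d_u) y_u`. Hence
`(q - 2δ)(q + 1 - Δ) ≤ 2(2m - nδ)` when `q > 2δ`, a quadratic inequality whose larger root is the
bound. When `q ≤ 2δ`, the bound follows from `nδ ≤ 2m`. -/

lemma le_half_add_sqrt_of_sq_le {t a b : ℝ} (h : t ^ 2 ≤ a * t + b) :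
    t ≤ 1 / 2 * (a + √(a ^ 2 + 4 * b)) := by
  have : 2 * t - a ≤ √(a ^ 2 + 4 * b) :=
    calc 2 * t - a ≤ |2 * t - a| := le_abs_self _
      _ = √((2 * t - a) ^ 2) := (Real.sqrt_sq_eq_abs _).symm
      _ ≤ √(a ^ 2 + 4 * b) := Real.sqrt_le_sqrt (by nlinarith)
  linarith

namespace SimpleGraph

variable {V : Type*} [Fintype V] (G : SimpleGraph V) [DecidableRel G.Adj]

lemma sum_degrees_cast_eq_twice_card_edges {R : Type*} [NonAssocSemiring R] :
    ∑ v, (G.degree v : R) = 2 * ((#G.edgeFinset : ℕ) : R) := by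
  rw [← Nat.cast_sum, G.sum_degrees_eq_twice_card_edges, Nat.cast_mul, Nat.cast_ofNat]

lemma card_mul_minDegree_le_twice_card_edges :
    Fintype.card V * G.minDegree ≤ 2 * #G.edgeFinset := by
  rw [← sum_degrees_eq_twice_card_edges, ← smul_eq_mul, ← Finset.card_univ, ← sum_const]
  exact sum_le_sum fun v _ ↦ G.minDegree_le_degree v

lemma sum_sum_neighborFinset {R : Type*} [Semiring R] (f : V → R) :
    ∑ v, ∑ w ∈ G.neighborFinset v, f w = ∑ v, G.degree v * f v := by
  simpa [dotProduct] using dotProduct_mulVec 1 (G.adjMatrix R) f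

lemma sum_degree_mul_le {y : V → ℝ} {u : V} (hu : ∀ v, y v ≤ y u) :
    ∑ v, (G.degree v : ℝ) * y v ≤
      G.minDegree * ∑ v, y v + (2 * #G.edgeFinset - Fintype.card V * G.minDegree) * y u :=
  calc ∑ v, (G.degree v : ℝ) * y v
      ≤ ∑ v, (G.minDegree * y v + (G.degree v - G.minDegree) * y u) := by
        refine sum_le_sum fun v _ ↦ ?_
        have : (G.minDegree : ℝ) ≤ G.degree v := mod_cast G.minDegree_le_degree v
        nlinarith [hu v]
    _ = G.minDegree * ∑ v, y v + (2 * #G.edgeFinset - Fintype.card V * G.minDegree) * y u := by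
        simp only [sum_add_distrib, ← mul_sum, ← sum_mul, sum_sub_distrib, sum_const, card_univ,
          sum_degrees_cast_eq_twice_card_edges, nsmul_eq_mul]

/-- `q y ≤ Q y` entrywise, for the signless Laplacian `Q` of `G`. -/
def IsSignlessSubEigenvector (q : ℝ) (y : V → ℝ) : Prop :=
  ∀ v, q * y v ≤ G.degree v * y v + ∑ w ∈ G.neighborFinset v, y w

lemma isSignlessSubEigenvector_abs {q : ℝ} (hq : 0 ≤ q) {x : V → ℝ}
    (hx : ∀ v, G.degree v * x v + ∑ w ∈ G.neighborFinset v, x w = q * x v) :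
    G.IsSignlessSubEigenvector q fun v ↦ |x v| := fun v ↦
  calc q * |x v| = |G.degree v * x v + ∑ w ∈ G.neighborFinset v, x w| := by
        rw [hx v, abs_mul, abs_of_nonneg hq]
    _ ≤ |G.degree v * x v| + ∑ w ∈ G.neighborFinset v, |x w| :=
        (abs_add_le _ _).trans (by gcongr; exact abs_sum_le_sum_abs _ _)
    _ = G.degree v * |x v| + ∑ w ∈ G.neighborFinset v, |x w| := by
        rw [abs_mul, Nat.abs_cast]

namespace IsSignlessSubEigenvector

variable {G} {q : ℝ} {y : V → ℝ}

lemma mul_sum_le (h : G.IsSignlessSubEigenvector q y) :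
    q * ∑ v, y v ≤ 2 * ∑ v, (G.degree v : ℝ) * y v :=
  calc q * ∑ v, y v = ∑ v, q * y v := mul_sum _ _ _
    _ ≤ ∑ v, ((G.degree v : ℝ) * y v + ∑ w ∈ G.neighborFinset v, y w) := sum_le_sum fun v _ ↦ h v
    _ = 2 * ∑ v, (G.degree v : ℝ) * y v := by
        rw [sum_add_distrib, G.sum_sum_neighborFinset]; ring

lemma one_add_sub_degree_mul_le_sum (h : G.IsSignlessSubEigenvector q y) (hy : 0 ≤ y) (u : V) :
    (1 + q - G.degree u) * y u ≤ ∑ v, y v := by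
  have : y u + ∑ w ∈ G.neighborFinset u, y w ≤ ∑ v, y v := by
    classical
    rw [← sum_insert (G.notMem_neighborFinset_self u)]
    exact sum_le_sum_of_subset_of_nonneg (subset_univ _) fun v _ _ ↦ hy v
  linarith [h u]

theorem sub_mul_sub_le (h : G.IsSignlessSubEigenvector q y) (hy : 0 ≤ y) (hy₀ : y ≠ 0)
    (hq : 2 * G.minDegree ≤ q) :
    (q - 2 * G.minDegree) * (q + 1 - G.maxDegree) ≤
      2 * (2 * #G.edgeFinset - Fintype.card V * G.minDegree) := by
  obtain ⟨v, hv⟩ := Function.ne_iff.mp hy₀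
  obtain ⟨u, -, hu⟩ := exists_max_image univ y ⟨v, mem_univ v⟩
  have hyu : 0 < y u := (lt_of_le_of_ne (hy v) (Ne.symm hv)).trans_le (hu v (mem_univ v))
  have hdu : (G.degree u : ℝ) ≤ G.maxDegree := mod_cast G.degree_le_maxDegree u
  refine le_of_mul_le_mul_right ?_ hyu
  calc (q - 2 * G.minDegree) * (q + 1 - G.maxDegree) * y u
      ≤ (q - 2 * G.minDegree) * ((1 + q - G.degree u) * y u) := by
        rw [← mul_assoc]
        exact mul_le_mul_of_nonneg_right
          (mul_le_mul_of_nonneg_left (by linarith) (by linarith)) hyu.le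
    _ ≤ (q - 2 * G.minDegree) * ∑ v, y v :=
        mul_le_mul_of_nonneg_left (h.one_add_sub_degree_mul_le_sum hy u) (by linarith)
    _ ≤ 2 * (2 * #G.edgeFinset - Fintype.card V * G.minDegree) * y u := by
        linarith [h.mul_sum_le, G.sum_degree_mul_le fun v ↦ hu v (mem_univ v)]

end IsSignlessSubEigenvector

end SimpleGraph

lemma signlessLaplacian_eq {n : ℕ} (G : SimpleGraph (Fin n)) [DecidableRel G.Adj] :
    signlessLaplacian G = G.degMatrix ℝ + G.adjMatrix ℝ := by
  unfold signlessLaplacian SimpleGraph.degMatrix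
  congr!

lemma signlessLaplacian_mulVec_apply {n : ℕ} (G : SimpleGraph (Fin n)) [DecidableRel G.Adj]
    (x : Fin n → ℝ) (v : Fin n) :
    (signlessLaplacian G *ᵥ x) v = G.degree v * x v + ∑ w ∈ G.neighborFinset v, x w := by
  rw [signlessLaplacian_eq, add_mulVec, Pi.add_apply, G.degMatrix_mulVec_apply,
    G.adjMatrix_mulVec_apply]

lemma exists_mulVec_eq_qIndex_smul {n : ℕ} [NeZero n] (G : SimpleGraph (Fin n)) :
    ∃ x ≠ 0, signlessLaplacian G *ᵥ x = qIndex G • x := by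
  have hQ := signlessLaplacian_isHermitian G
  obtain ⟨i, hi⟩ : ∃ i, hQ.eigenvalues i = qIndex G := exists_eq_ciSup_of_finite
  refine ⟨hQ.eigenvectorBasis i, fun h ↦ hQ.eigenvectorBasis.orthonormal.ne_zero i ?_, ?_⟩
  · ext v; exact congrFun h v
  · rw [hQ.mulVec_eigenvectorBasis i, hi]

theorem stmt8 (n : ℕ) (G : SimpleGraph (Fin n)) [DecidableRel G.Adj] :
    qIndex G ≤ (1 / 2) * (((G.maxDegree : ℝ) + 2 * G.minDegree - 1) +
      Real.sqrt (((G.maxDegree : ℝ) + 2 * G.minDegree - 1) ^ 2 +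
        16 * G.edgeSet.ncard - 8 * ((n : ℝ) - 1 + G.maxDegree) * G.minDegree)) := by
  rw [← G.coe_edgeFinset, Set.ncard_coe_finset]
  set q := qIndex G
  set Δ := (G.maxDegree : ℝ)
  set δ := (G.minDegree : ℝ)
  set m := ((#G.edgeFinset : ℕ) : ℝ)
  have hδ : 0 ≤ δ := Nat.cast_nonneg _
  have hroot {t : ℝ} (ht : t ^ 2 ≤ (Δ + 2 * δ - 1) * t + (4 * m - 2 * (n - 1) * δ - 2 * Δ * δ)) :
      t ≤ 1 / 2 * (Δ + 2 * δ - 1 + √((Δ + 2 * δ - 1) ^ 2 + 16 * m - 8 * (n - 1 + Δ) * δ)) := by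
    convert le_half_add_sqrt_of_sq_le ht using 4; ring
  have hnδ : n * δ ≤ 2 * m := by
    simpa using (Nat.cast_le (α := ℝ)).mpr G.card_mul_minDegree_le_twice_card_edges
  rcases le_or_gt q (2 * δ) with hq | hq
  · exact hq.trans (hroot (by nlinarith))
  have : NeZero n := ⟨by rintro rfl; simp [q, qIndex] at hq; linarith⟩
  obtain ⟨x, hx₀, hx⟩ := exists_mulVec_eq_qIndex_smul G
  have hsub : G.IsSignlessSubEigenvector q fun v ↦ |x v| :=
    G.isSignlessSubEigenvector_abs (by linarith) fun v ↦ by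
      rw [← signlessLaplacian_mulVec_apply, hx, Pi.smul_apply, smul_eq_mul]
  have key := hsub.sub_mul_sub_le (fun v ↦ abs_nonneg (x v))
    (fun h ↦ hx₀ (funext fun v ↦ abs_eq_zero.mp (congrFun h v))) hq.le
  rw [Fintype.card_fin] at key
  exact hroot (by nlinarith)
end

section
/- Fix n ≥ 1 and 0 ≤ m ≤ n(n−1)/2. The function f(x,y) = y + 2x − 1 + sqrt((y + 2x − 1)² + 16m − 8(n − 1 + y)x), defined for x ≤ 2m/n and y ≥ 2m/n (where the radicand is nonnegative), is nonincreasing in x and nondecreasing in y. -/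
open Matrix Finset BigOperators

/-- The function `f` of Proposition 1 of the paper. -/
noncomputable def fFun (n m x y : ℝ) : ℝ :=
  y + 2 * x - 1 + Real.sqrt ((y + 2 * x - 1) ^ 2 + 16 * m - 8 * (n - 1 + y) * x)

/-!
Write `R = R(x, y)` for the radicand of `f`. Then `R(x - d, y) = R + 2(2d)T + (2d)²` with
`T = 2n + y - 1 - 2x`, and `R(x, y - e) = R + 2eV + e²` with `V = 2x + 1 - y`. Since
`(√R + δ)² = R + 2δ√R + δ²`, we get `√R(x - d, y) ≥ √R + 2d` as soon as `√R ≤ T`, and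
`√R(x, y - e) ≤ √R + e` as soon as `V ≤ √R`, which gives both monotonicity claims.
The two bounds follow from the identities: `T² - R = 4(n(n - 1) + ny - 4m) ≥ 0` and
`R - V² = 8(2m - nx) ≥ 0`.
-/

namespace Real

theorem sqrt_add_le_sqrt_add_two_mul_add_sq {R e V : ℝ} (hR : 0 ≤ R) (he : 0 ≤ e)
    (hV : √R ≤ V) : √R + e ≤ √(R + 2 * e * V + e ^ 2) := by
  apply Real.le_sqrt_of_sq_le
  nlinarith [Real.sq_sqrt hR, mul_le_mul_of_nonneg_left hV he]

theorem sqrt_add_two_mul_add_sq_le_sqrt_add {R e V : ℝ} (hR : 0 ≤ R) (he : 0 ≤ e)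
    (hV : V ≤ √R) : √(R + 2 * e * V + e ^ 2) ≤ √R + e := by
  rw [Real.sqrt_le_left (by positivity)]
  nlinarith [Real.sq_sqrt hR, mul_le_mul_of_nonneg_left hV he]

end Real

noncomputable def fRadicand (n m x y : ℝ) : ℝ :=
  (y + 2 * x - 1) ^ 2 + 16 * m - 8 * (n - 1 + y) * x

theorem fFun_eq (n m x y : ℝ) : fFun n m x y = y + 2 * x - 1 + √(fRadicand n m x y) := rfl

theorem fRadicand_sub_left (n m x d y : ℝ) :
    fRadicand n m (x - d) y
      = fRadicand n m x y + 2 * (2 * d) * (2 * n + y - 1 - 2 * x) + (2 * d) ^ 2 := by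
  unfold fRadicand; ring

theorem fRadicand_sub_right (n m x y e : ℝ) :
    fRadicand n m x (y - e) = fRadicand n m x y + 2 * e * (2 * x + 1 - y) + e ^ 2 := by
  unfold fRadicand; ring

theorem sqrt_fRadicand_le {n m x y : ℝ} (hn : 0 < n) (hm : 2 * m ≤ n * (n - 1))
    (hx : x ≤ 2 * m / n) (hy : 2 * m / n ≤ y) :
    √(fRadicand n m x y) ≤ 2 * n + y - 1 - 2 * x := by
  have hny : 2 * m ≤ n * y := by rw [div_le_iff₀ hn] at hy; linarith
  have hxn : x ≤ n - 1 := hx.trans <| (div_le_iff₀ hn).2 (by linarith)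
  rw [Real.sqrt_le_left (by linarith)]
  have key : (2 * n + y - 1 - 2 * x) ^ 2 - fRadicand n m x y
      = 4 * (n * (n - 1) + n * y - 4 * m) := by
    unfold fRadicand; ring
  linarith

theorem le_sqrt_fRadicand {n m x y : ℝ} (hn : 0 < n) (hx : x ≤ 2 * m / n) :
    2 * x + 1 - y ≤ √(fRadicand n m x y) ∧ 0 ≤ fRadicand n m x y := by
  have hnx : n * x ≤ 2 * m := by rw [le_div_iff₀ hn] at hx; linarith
  have key : fRadicand n m x y - (2 * x + 1 - y) ^ 2 = 8 * (2 * m - n * x) := by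
    unfold fRadicand; ring
  have hsq : (2 * x + 1 - y) ^ 2 ≤ fRadicand n m x y := by linarith
  exact ⟨(le_abs_self _).trans (Real.abs_le_sqrt hsq), (sq_nonneg _).trans hsq⟩

theorem fFun_le_fFun_of_le_left {n m x₁ x₂ y : ℝ} (hn : 0 < n) (hm : 2 * m ≤ n * (n - 1))
    (h₁₂ : x₁ ≤ x₂) (hx₂ : x₂ ≤ 2 * m / n) (hy : 2 * m / n ≤ y) (hR : 0 ≤ fRadicand n m x₂ y) :
    fFun n m x₂ y ≤ fFun n m x₁ y := by
  have hsqrt : √(fRadicand n m x₂ y) + 2 * (x₂ - x₁) ≤ √(fRadicand n m x₁ y) := by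
    have := Real.sqrt_add_le_sqrt_add_two_mul_add_sq hR (by linarith : 0 ≤ 2 * (x₂ - x₁))
      (sqrt_fRadicand_le hn hm hx₂ hy)
    rwa [← fRadicand_sub_left, sub_sub_cancel] at this
  rw [fFun_eq, fFun_eq]
  linarith

theorem fFun_le_fFun_of_le_right {n m x y₁ y₂ : ℝ} (hn : 0 < n) (hx : x ≤ 2 * m / n)
    (h₁₂ : y₁ ≤ y₂) : fFun n m x y₁ ≤ fFun n m x y₂ := by
  obtain ⟨hV, hR⟩ := le_sqrt_fRadicand (y := y₂) hn hx
  have hsqrt : √(fRadicand n m x y₁) ≤ √(fRadicand n m x y₂) + (y₂ - y₁) := by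
    have := Real.sqrt_add_two_mul_add_sq_le_sqrt_add hR (sub_nonneg.2 h₁₂) hV
    rwa [← fRadicand_sub_right, sub_sub_cancel] at this
  rw [fFun_eq, fFun_eq]
  linarith

theorem stmt11_general (n m : ℝ) (hn : 1 ≤ n) (hm : m ≤ n * (n - 1) / 2) :
    (∀ x₁ x₂ y : ℝ, x₁ ≤ x₂ → x₂ ≤ 2 * m / n → 2 * m / n ≤ y →
      0 ≤ (y + 2 * x₁ - 1) ^ 2 + 16 * m - 8 * (n - 1 + y) * x₁ →
      0 ≤ (y + 2 * x₂ - 1) ^ 2 + 16 * m - 8 * (n - 1 + y) * x₂ →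
      fFun n m x₂ y ≤ fFun n m x₁ y) ∧
    (∀ x y₁ y₂ : ℝ, x ≤ 2 * m / n → 2 * m / n ≤ y₁ → y₁ ≤ y₂ →
      0 ≤ (y₁ + 2 * x - 1) ^ 2 + 16 * m - 8 * (n - 1 + y₁) * x →
      0 ≤ (y₂ + 2 * x - 1) ^ 2 + 16 * m - 8 * (n - 1 + y₂) * x →
      fFun n m x y₁ ≤ fFun n m x y₂) := by
  have hn₀ : 0 < n := by linarith
  refine ⟨fun x₁ x₂ y h₁₂ hx₂ hy _ hR₂ ↦ ?_, fun x y₁ y₂ hx _ h₁₂ _ _ ↦ ?_⟩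
  · exact fFun_le_fFun_of_le_left hn₀ (by linarith) h₁₂ hx₂ hy hR₂
  · exact fFun_le_fFun_of_le_right hn₀ hx h₁₂

theorem stmt11 (n m : ℝ) (hn : 1 ≤ n) (hm0 : 0 ≤ m) (hm : m ≤ n * (n - 1) / 2) :
    (∀ x₁ x₂ y : ℝ, x₁ ≤ x₂ → x₂ ≤ 2 * m / n → 2 * m / n ≤ y →
      0 ≤ (y + 2 * x₁ - 1) ^ 2 + 16 * m - 8 * (n - 1 + y) * x₁ →
      0 ≤ (y + 2 * x₂ - 1) ^ 2 + 16 * m - 8 * (n - 1 + y) * x₂ →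
      fFun n m x₂ y ≤ fFun n m x₁ y) ∧
    (∀ x y₁ y₂ : ℝ, x ≤ 2 * m / n → 2 * m / n ≤ y₁ → y₁ ≤ y₂ →
      0 ≤ (y₁ + 2 * x - 1) ^ 2 + 16 * m - 8 * (n - 1 + y₁) * x →
      0 ≤ (y₂ + 2 * x - 1) ^ 2 + 16 * m - 8 * (n - 1 + y₂) * x →
      fFun n m x y₁ ≤ fFun n m x y₂) :=
  stmt11_general n m hn hm
end
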